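/- arXiv:2109.06680 — 3 statements merged into one kernel-verified Lean document; each statement's English description precedes it below -/
import Mathlib

section
/- Let Ω be a connected weighted simplicial complex on [n], let a finite group G act on Ω with the action on ℱ̃ free, and fix convex cones C^[i] ⊆ ℝ[x^[i]] with C^[g·i] = C^[i] for all g ∈ G. Then every G-invariant p ∈ C_sep admits a separable (Ω,G)-decomposition, i.e. sep-rank_{(Ω,G)}(p) < ∞. -/
namespace PolyDec

open MvPolynomial

attribute [local instance] Classical.propDecidable

noncomputable section

/-! ### Weighted simplicial complexes -/

/-- `Ω` is a weighted simplicial complex on `[n] = {0,…,n}`. -/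
def IsWSC {n : ℕ} (Ω : Finset (Fin (n + 1)) → ℕ) : Prop :=
  (∀ S T : Finset (Fin (n + 1)), S ⊆ T → Ω S ∣ Ω T) ∧ ∀ i : Fin (n + 1), Ω {i} ≠ 0

/-- `F` is a facet of `Ω`: a maximal simplex. -/
def IsFacet {n : ℕ} (Ω : Finset (Fin (n + 1)) → ℕ) (F : Finset (Fin (n + 1))) : Prop :=
  Ω F ≠ 0 ∧ ∀ S : Finset (Fin (n + 1)), Ω S ≠ 0 → F ⊆ S → S = F

/-- `Ω` is connected: any two vertices are joined by a chain of vertices such that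
consecutive ones share a facet. -/
def Conn {n : ℕ} (Ω : Finset (Fin (n + 1)) → ℕ) : Prop :=
  ∀ i j : Fin (n + 1),
    Relation.ReflTransGen
      (fun a b => ∃ F : Finset (Fin (n + 1)), IsFacet Ω F ∧ a ∈ F ∧ b ∈ F) i j

/-- The multiset of facets `ℱ̃`: each facet `F` appears with multiplicity `Ω F`. -/
abbrev MultiFacet {n : ℕ} (Ω : Finset (Fin (n + 1)) → ℕ) : Type :=
  Σ F : {F : Finset (Fin (n + 1)) // IsFacet Ω F}, Fin (Ω F.1)

/-- The sub-multiset `ℱ̃ᵢ` of multifacets containing the vertex `i`. -/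
abbrev MFi {n : ℕ} (Ω : Finset (Fin (n + 1)) → ℕ) (i : Fin (n + 1)) : Type :=
  {F : MultiFacet Ω // i ∈ F.1.1}

/-- Restriction `α|ᵢ` of `α : ℱ̃ → I` to `ℱ̃ᵢ`. -/
def restr {n : ℕ} {Ω : Finset (Fin (n + 1)) → ℕ} {I : Type} (α : MultiFacet Ω → I)
    (i : Fin (n + 1)) : MFi Ω i → I :=
  fun F => α F.1

/-! ### Group actions on a weighted simplicial complex -/

/-- An action of a group `G` on the weighted simplicial complex `Ω`:
an action on the vertices leaving `Ω` invariant, together with a refinement to an action on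
the multiset of facets which is compatible with the collapse map. -/
structure GAct {n : ℕ} (Ω : Finset (Fin (n + 1)) → ℕ) (G : Type) [Group G] where
  act : G →* Equiv.Perm (Fin (n + 1))
  omega_inv : ∀ (g : G) (S : Finset (Fin (n + 1))), Ω (S.image (act g)) = Ω S
  actF : G →* Equiv.Perm (MultiFacet Ω)
  collapse : ∀ (g : G) (F : MultiFacet Ω), (actF g F).1.1 = F.1.1.image (act g)

variable {n : ℕ} {Ω : Finset (Fin (n + 1)) → ℕ} {G : Type} [Group G]

/-- The action is free on `ℱ̃`. -/
def GAct.Free (A : GAct Ω G) : Prop :=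
  ∀ (g : G) (F : MultiFacet Ω), A.actF g F = F → g = 1

/-- The action on the vertices is blending. -/
def GAct.Blending (A : GAct Ω G) : Prop :=
  ∀ gs : Fin (n + 1) → G,
    (Function.Surjective fun i => A.act (gs i) i) →
      ∃ g : G, ∀ i, A.act g i = A.act (gs i) i

theorem GAct.mem_shift (A : GAct Ω G) (g : G) (i : Fin (n + 1)) (F : MFi Ω (A.act g i)) :
    i ∈ (A.actF g⁻¹ F.1).1.1 := by
  rw [A.collapse]
  refine Finset.mem_image.2 ⟨A.act g i, F.2, ?_⟩
  rw [map_inv]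
  exact Equiv.symm_apply_apply _ _

/-- For `β : ℱ̃ᵢ → I`, the shifted function `ᵍβ : ℱ̃_{g·i} → I`, `(ᵍβ)(F) = β (g⁻¹·F)`. -/
def GAct.shift (A : GAct Ω G) (g : G) (i : Fin (n + 1)) {I : Type} (β : MFi Ω i → I) :
    MFi Ω (A.act g i) → I :=
  fun F => β ⟨A.actF g⁻¹ F.1, A.mem_shift g i F⟩

/-! ### Polynomial spaces -/

/-- The space `𝒫 = ℝ[x⁽⁰⁾,…,x⁽ⁿ⁾]`, where block `i` has `m i` variables. -/
abbrev PSpace {n : ℕ} (m : Fin (n + 1) → ℕ) : Type :=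
  MvPolynomial (Σ i : Fin (n + 1), Fin (m i)) ℝ

/-- The local space `ℝ[x⁽ⁱ⁾]`. -/
abbrev LSpace {n : ℕ} (m : Fin (n + 1) → ℕ) (i : Fin (n + 1)) : Type :=
  MvPolynomial (Fin (m i)) ℝ

/-- The inclusion `ℝ[x⁽ⁱ⁾] → 𝒫`. -/
def emb {n : ℕ} (m : Fin (n + 1) → ℕ) (i : Fin (n + 1)) : LSpace m i →ₐ[ℝ] PSpace m :=
  rename fun j => (⟨i, j⟩ : Σ i : Fin (n + 1), Fin (m i))

variable {m : Fin (n + 1) → ℕ}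

/-- The variable permutation `x⁽ⁱ⁾ ↦ x⁽ᵍ·ⁱ⁾` induced by `g`. -/
def permVar (A : GAct Ω G) (hm : ∀ (g : G) (i : Fin (n + 1)), m (A.act g i) = m i) (g : G) :
    (Σ i : Fin (n + 1), Fin (m i)) → Σ i : Fin (n + 1), Fin (m i) :=
  fun v => ⟨A.act g v.1, Fin.cast (hm g v.1).symm v.2⟩

/-- `p` is `G`-invariant: `p(x⁽ᵍ⁰⁾,…,x⁽ᵍⁿ⁾) = p(x⁽⁰⁾,…,x⁽ⁿ⁾)` for all `g ∈ G`. -/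
def GInvPoly (A : GAct Ω G) (hm : ∀ (g : G) (i : Fin (n + 1)), m (A.act g i) = m i)
    (p : PSpace m) : Prop :=
  ∀ g : G, rename (permVar A hm g) p = p

/-! ### Sums of squares, cones -/

/-- `p` is a sum of squares. -/
def IsSos {σ : Type} (p : MvPolynomial σ ℝ) : Prop :=
  ∃ (N : ℕ) (q : Fin N → MvPolynomial σ ℝ), p = ∑ k : Fin N, q k ^ 2

/-- `C` is a convex cone. -/
def IsConvexConeSet {V : Type} [AddCommMonoid V] [Module ℝ V] (C : Set V) : Prop :=
  ∀ p ∈ C, ∀ q ∈ C, ∀ a b : ℝ, 0 ≤ a → 0 ≤ b → a • p + b • q ∈ C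

/-- The local cones agree along orbits, `C⁽ᵍ·ⁱ⁾ = C⁽ⁱ⁾` (under the renaming identification). -/
def ConeCompat (A : GAct Ω G) (hm : ∀ (g : G) (i : Fin (n + 1)), m (A.act g i) = m i)
    (C : ∀ i : Fin (n + 1), Set (LSpace m i)) : Prop :=
  ∀ (g : G) (i : Fin (n + 1)) (q : LSpace m (A.act g i)),
    q ∈ C (A.act g i) ↔ rename (Fin.cast (hm g i)) q ∈ C i

/-- The separable cone `C_sep = C⁽⁰⁾ ⊗ ⋯ ⊗ C⁽ⁿ⁾`. -/
def SepCone {n : ℕ} (m : Fin (n + 1) → ℕ) (C : ∀ i : Fin (n + 1), Set (LSpace m i)) :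
    Set (PSpace m) :=
  {p | ∃ (r : ℕ) (q : Fin r → ∀ i : Fin (n + 1), LSpace m i),
    (∀ j i, q j i ∈ C i) ∧ p = ∑ j : Fin r, ∏ i : Fin (n + 1), emb m i (q j i)}

/-! ### Decompositions and ranks -/

/-- `p` has an `Ω`-decomposition with index set of size `r`. -/
def HasODec {n : ℕ} (Ω : Finset (Fin (n + 1)) → ℕ) (m : Fin (n + 1) → ℕ) (p : PSpace m)
    (r : ℕ) : Prop :=
  ∃ q : ∀ i : Fin (n + 1), (MFi Ω i → Fin r) → LSpace m i,
    p = ∑ α : MultiFacet Ω → Fin r, ∏ i : Fin (n + 1), emb m i (q i (restr α i))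

/-- The `Ω`-rank of `p` (`⊤` if there is no decomposition). -/
def ORank {n : ℕ} (Ω : Finset (Fin (n + 1)) → ℕ) (m : Fin (n + 1) → ℕ) (p : PSpace m) : ℕ∞ :=
  ⨅ r : {r : ℕ // HasODec Ω m p r}, (r.1 : ℕ∞)

/-- `p` has an `(Ω,G)`-decomposition with index set of size `r`. -/
def HasOGDec (A : GAct Ω G) (hm : ∀ (g : G) (i : Fin (n + 1)), m (A.act g i) = m i)
    (p : PSpace m) (r : ℕ) : Prop :=
  ∃ q : ∀ i : Fin (n + 1), (MFi Ω i → Fin r) → LSpace m i,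
    (p = ∑ α : MultiFacet Ω → Fin r, ∏ i : Fin (n + 1), emb m i (q i (restr α i))) ∧
    ∀ (g : G) (i : Fin (n + 1)) (β : MFi Ω i → Fin r),
      rename (Fin.cast (hm g i)) (q (A.act g i) (A.shift g i β)) = q i β

/-- The `(Ω,G)`-rank of `p`. -/
def OGRank (A : GAct Ω G) (hm : ∀ (g : G) (i : Fin (n + 1)), m (A.act g i) = m i)
    (p : PSpace m) : ℕ∞ :=
  ⨅ r : {r : ℕ // HasOGDec A hm p r}, (r.1 : ℕ∞)

/-- `p` has a decomposition on the simplex `Σₙ` (a plain tensor decomposition) of size `r`. -/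
def HasTDec {n : ℕ} (m : Fin (n + 1) → ℕ) (p : PSpace m) (r : ℕ) : Prop :=
  ∃ q : Fin r → ∀ i : Fin (n + 1), LSpace m i,
    p = ∑ j : Fin r, ∏ i : Fin (n + 1), emb m i (q j i)

/-- The tensor rank `rank_{Σₙ}(p)`. -/
def TRank {n : ℕ} (m : Fin (n + 1) → ℕ) (p : PSpace m) : ℕ∞ :=
  ⨅ r : {r : ℕ // HasTDec m p r}, (r.1 : ℕ∞)

/-- Separable `Ω`-decomposition w.r.t. the local cones `C`. -/
def HasSepODec {n : ℕ} (Ω : Finset (Fin (n + 1)) → ℕ) (m : Fin (n + 1) → ℕ)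
    (C : ∀ i : Fin (n + 1), Set (LSpace m i)) (p : PSpace m) (r : ℕ) : Prop :=
  ∃ q : ∀ i : Fin (n + 1), (MFi Ω i → Fin r) → LSpace m i,
    (p = ∑ α : MultiFacet Ω → Fin r, ∏ i : Fin (n + 1), emb m i (q i (restr α i))) ∧
    ∀ i β, q i β ∈ C i

/-- The separable `Ω`-rank. -/
def SepORank {n : ℕ} (Ω : Finset (Fin (n + 1)) → ℕ) (m : Fin (n + 1) → ℕ)
    (C : ∀ i : Fin (n + 1), Set (LSpace m i)) (p : PSpace m) : ℕ∞ :=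
  ⨅ r : {r : ℕ // HasSepODec Ω m C p r}, (r.1 : ℕ∞)

/-- Separable `(Ω,G)`-decomposition w.r.t. the local cones `C`. -/
def HasSepOGDec (A : GAct Ω G) (hm : ∀ (g : G) (i : Fin (n + 1)), m (A.act g i) = m i)
    (C : ∀ i : Fin (n + 1), Set (LSpace m i)) (p : PSpace m) (r : ℕ) : Prop :=
  ∃ q : ∀ i : Fin (n + 1), (MFi Ω i → Fin r) → LSpace m i,
    (p = ∑ α : MultiFacet Ω → Fin r, ∏ i : Fin (n + 1), emb m i (q i (restr α i))) ∧
    (∀ (g : G) (i : Fin (n + 1)) (β : MFi Ω i → Fin r),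
      rename (Fin.cast (hm g i)) (q (A.act g i) (A.shift g i β)) = q i β) ∧
    ∀ i β, q i β ∈ C i

/-- The separable `(Ω,G)`-rank. -/
def SepOGRank (A : GAct Ω G) (hm : ∀ (g : G) (i : Fin (n + 1)), m (A.act g i) = m i)
    (C : ∀ i : Fin (n + 1), Set (LSpace m i)) (p : PSpace m) : ℕ∞ :=
  ⨅ r : {r : ℕ // HasSepOGDec A hm C p r}, (r.1 : ℕ∞)

/-- Separable decomposition on the simplex `Σₙ`. -/
def HasSepTDec {n : ℕ} (m : Fin (n + 1) → ℕ) (C : ∀ i : Fin (n + 1), Set (LSpace m i))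
    (p : PSpace m) (r : ℕ) : Prop :=
  ∃ q : Fin r → ∀ i : Fin (n + 1), LSpace m i,
    (∀ j i, q j i ∈ C i) ∧ p = ∑ j : Fin r, ∏ i : Fin (n + 1), emb m i (q j i)

/-- The separable rank on the simplex. -/
def SepTRank {n : ℕ} (m : Fin (n + 1) → ℕ) (C : ∀ i : Fin (n + 1), Set (LSpace m i))
    (p : PSpace m) : ℕ∞ :=
  ⨅ r : {r : ℕ // HasSepTDec m C p r}, (r.1 : ℕ∞)

/-- `p` has a sum-of-squares `(Ω,G)`-decomposition of size `r`: a `G`-invariant family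
`𝔮 = (q_k)` with `p = ∑ q_k²` together with an `(Ω,G)`-decomposition of the family. -/
def HasSosOGDec (A : GAct Ω G) (hm : ∀ (g : G) (i : Fin (n + 1)), m (A.act g i) = m i)
    (p : PSpace m) (r : ℕ) : Prop :=
  ∃ (s : Fin (n + 1) → ℕ) (hs : ∀ (g : G) (i : Fin (n + 1)), s (A.act g i) = s i)
    (q : ∀ i : Fin (n + 1), Fin (s i) → (MFi Ω i → Fin r) → LSpace m i),
    (p = ∑ k : ∀ i : Fin (n + 1), Fin (s i),
        (∑ α : MultiFacet Ω → Fin r, ∏ i : Fin (n + 1), emb m i (q i (k i) (restr α i))) ^ 2) ∧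
    ∀ (g : G) (i : Fin (n + 1)) (kk : Fin (s i)) (β : MFi Ω i → Fin r),
      rename (Fin.cast (hm g i))
        (q (A.act g i) (Fin.cast (hs g i).symm kk) (A.shift g i β)) = q i kk β

/-- The sos `(Ω,G)`-rank. -/
def SosOGRank (A : GAct Ω G) (hm : ∀ (g : G) (i : Fin (n + 1)), m (A.act g i) = m i)
    (p : PSpace m) : ℕ∞ :=
  ⨅ r : {r : ℕ // HasSosOGDec A hm p r}, (r.1 : ℕ∞)

/-! ### Local degree -/

/-- Every monomial of `p` has degree at most `d` in each block of variables. -/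
def locDegLE {n : ℕ} (m : Fin (n + 1) → ℕ) (p : PSpace m) (d : ℕ) : Prop :=
  ∀ s ∈ p.support, ∀ i : Fin (n + 1), (∑ j : Fin (m i), s ⟨i, j⟩) ≤ d

/-- The local degree of `p`. -/
def locDeg {n : ℕ} (m : Fin (n + 1) → ℕ) (p : PSpace m) : ℕ :=
  sInf {d : ℕ | locDegLE m p d}

/-! ### Tensor decompositions -/

/-- `(Ω,G)`-decomposition of a tensor `T ∈ ℝ^mv ⊗ ⋯ ⊗ ℝ^mv`. -/
def HasTOGDec (A : GAct Ω G) (mv : ℕ) (T : (Fin (n + 1) → Fin mv) → ℝ) (r : ℕ) : Prop :=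
  ∃ v : ∀ i : Fin (n + 1), (MFi Ω i → Fin r) → Fin mv → ℝ,
    (∀ jf : Fin (n + 1) → Fin mv,
      T jf = ∑ α : MultiFacet Ω → Fin r, ∏ i : Fin (n + 1), v i (restr α i) (jf i)) ∧
    ∀ (g : G) (i : Fin (n + 1)) (β : MFi Ω i → Fin r), v (A.act g i) (A.shift g i β) = v i β

/-- The `(Ω,G)`-rank of a tensor. -/
def TOGRank (A : GAct Ω G) (mv : ℕ) (T : (Fin (n + 1) → Fin mv) → ℝ) : ℕ∞ :=
  ⨅ r : {r : ℕ // HasTOGDec A mv T r}, (r.1 : ℕ∞)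

/-- Nonnegative `(Ω,G)`-decomposition of a tensor. -/
def HasNNTOGDec (A : GAct Ω G) (mv : ℕ) (T : (Fin (n + 1) → Fin mv) → ℝ) (r : ℕ) : Prop :=
  ∃ v : ∀ i : Fin (n + 1), (MFi Ω i → Fin r) → Fin mv → ℝ,
    (∀ jf : Fin (n + 1) → Fin mv,
      T jf = ∑ α : MultiFacet Ω → Fin r, ∏ i : Fin (n + 1), v i (restr α i) (jf i)) ∧
    (∀ (g : G) (i : Fin (n + 1)) (β : MFi Ω i → Fin r), v (A.act g i) (A.shift g i β) = v i β) ∧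
    ∀ i β j, 0 ≤ v i β j

/-- The nonnegative `(Ω,G)`-rank of a tensor. -/
def NNTOGRank (A : GAct Ω G) (mv : ℕ) (T : (Fin (n + 1) → Fin mv) → ℝ) : ℕ∞ :=
  ⨅ r : {r : ℕ // HasNNTOGDec A mv T r}, (r.1 : ℕ∞)

/-- Positive semidefinite `(Ω,G)`-decomposition of a tensor. -/
def HasPsdTOGDec (A : GAct Ω G) (mv : ℕ) (T : (Fin (n + 1) → Fin mv) → ℝ) (r : ℕ) : Prop :=
  ∃ E : ∀ i : Fin (n + 1), Fin mv → Matrix (MFi Ω i → Fin r) (MFi Ω i → Fin r) ℝ,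
    (∀ i j, (E i j).PosSemidef) ∧
    (∀ (g : G) (i : Fin (n + 1)) (j : Fin mv) (β β' : MFi Ω i → Fin r),
      E (A.act g i) j (A.shift g i β) (A.shift g i β') = E i j β β') ∧
    ∀ jf : Fin (n + 1) → Fin mv,
      T jf = ∑ α : MultiFacet Ω → Fin r, ∑ α' : MultiFacet Ω → Fin r,
        ∏ i : Fin (n + 1), E i (jf i) (restr α i) (restr α' i)

/-- The positive semidefinite `(Ω,G)`-rank of a tensor. -/
def PsdTOGRank (A : GAct Ω G) (mv : ℕ) (T : (Fin (n + 1) → Fin mv) → ℝ) : ℕ∞ :=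
  ⨅ r : {r : ℕ // HasPsdTOGDec A mv T r}, (r.1 : ℕ∞)

/-- The polynomial `p_T = ∑ T_{j₀…jₙ} (x⁽⁰⁾_{j₀})² ⋯ (x⁽ⁿ⁾_{jₙ})²` associated to a tensor. -/
def pT {n : ℕ} (mv : ℕ) (T : (Fin (n + 1) → Fin mv) → ℝ) :
    PSpace (fun _ : Fin (n + 1) => mv) :=
  ∑ jf : Fin (n + 1) → Fin mv, MvPolynomial.C (T jf) *
    ∏ i : Fin (n + 1), X (⟨i, jf i⟩ : Σ _ : Fin (n + 1), Fin mv) ^ 2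

/-! ### The Gram map -/

/-- Exponent vectors of monomials of degree at most `d` in `mv` variables. -/
abbrev Mon (mv d : ℕ) : Type := {k : Fin mv → Fin (d + 1) // (∑ j : Fin mv, (k j).val) ≤ d}

/-- The monomial at site `i` with exponent vector `k`. -/
def monAt {n : ℕ} {mv d : ℕ} (i : Fin (n + 1)) (k : Mon mv d) :
    PSpace (fun _ : Fin (n + 1) => mv) :=
  ∏ j : Fin mv, X (⟨i, j⟩ : Σ _ : Fin (n + 1), Fin mv) ^ (k.1 j).val

/-- The Gram map `𝒢(M) = 𝔪ᵗ M 𝔪`. -/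
def gram {n : ℕ} {mv d : ℕ}
    (M : Matrix (Fin (n + 1) → Mon mv d) (Fin (n + 1) → Mon mv d) ℝ) :
    PSpace (fun _ : Fin (n + 1) => mv) :=
  ∑ k : Fin (n + 1) → Mon mv d, ∑ k' : Fin (n + 1) → Mon mv d,
    M k k' • ∏ i : Fin (n + 1), (monAt i (k i) * monAt i (k' i))

/-! ### Homogeneous Gram map, norms -/

/-- Exponent vectors of monomials of degree exactly `d` in `mv + 1` variables. -/
abbrev MonH (mv d : ℕ) : Type :=
  {k : Fin (mv + 1) → Fin (d + 1) // (∑ j : Fin (mv + 1), (k j).val) = d}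

/-- The homogeneous monomial at site `i` with exponent vector `k`. -/
def monHAt {n : ℕ} {mv d : ℕ} (i : Fin (n + 1)) (k : MonH mv d) :
    PSpace (fun _ : Fin (n + 1) => mv + 1) :=
  ∏ j : Fin (mv + 1), X (⟨i, j⟩ : Σ _ : Fin (n + 1), Fin (mv + 1)) ^ (k.1 j).val

/-- The Gram map in the homogeneous setting. -/
def gramH {n : ℕ} {mv d : ℕ}
    (M : Matrix (Fin (n + 1) → MonH mv d) (Fin (n + 1) → MonH mv d) ℝ) :
    PSpace (fun _ : Fin (n + 1) => mv + 1) :=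
  ∑ k : Fin (n + 1) → MonH mv d, ∑ k' : Fin (n + 1) → MonH mv d,
    M k k' • ∏ i : Fin (n + 1), (monHAt i (k i) * monHAt i (k' i))

/-- The largest singular value (ℓ²-operator norm) of a real square matrix. -/
def sigmaMax {ι : Type} [Fintype ι] (M : Matrix ι ι ℝ) : ℝ :=
  sSup {r : ℝ | ∃ y : ι → ℝ, (∑ t, y t ^ 2) ≤ 1 ∧ r = Real.sqrt (∑ t, (M.mulVec y t) ^ 2)}

/-- The supremum norm of `p` on `𝕊 = 𝕊^m × ⋯ × 𝕊^m`. -/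
def InfNormH {n mv : ℕ} (p : PSpace (fun _ : Fin (n + 1) => mv + 1)) : ℝ :=
  sSup {r : ℝ | ∃ a : Fin (n + 1) → Fin (mv + 1) → ℝ,
    (∀ i, ∑ j, a i j ^ 2 = 1) ∧
    r = |MvPolynomial.eval (fun v : Σ _ : Fin (n + 1), Fin (mv + 1) => a v.1 v.2) p|}

/-- `p` is homogeneous of degree `d` in each block of variables separately. -/
def MultiHomog {n : ℕ} (m : Fin (n + 1) → ℕ) (d : ℕ) (p : PSpace m) : Prop :=
  ∀ s ∈ p.support, ∀ i : Fin (n + 1), (∑ j : Fin (m i), s ⟨i, j⟩) = d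

/-- `M` is a separable matrix: a sum of elementary tensors of psd matrices. -/
def SepGram {n : ℕ} {mv d : ℕ}
    (M : Matrix (Fin (n + 1) → MonH mv d) (Fin (n + 1) → MonH mv d) ℝ) : Prop :=
  ∃ (N : ℕ) (Ms : Fin N → ∀ _ : Fin (n + 1), Matrix (MonH mv d) (MonH mv d) ℝ),
    (∀ j i, (Ms j i).PosSemidef) ∧
    ∀ k k', M k k' = ∑ j : Fin N, ∏ i : Fin (n + 1), Ms j i (k i) (k' i)

/-- `μ(p)`: the smallest `λ > 0` such that `p = λ·𝒢(M)` for some `G`-invariant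
subnormalized separable matrix `M`. -/
def muP {n : ℕ} {Ω : Finset (Fin (n + 1)) → ℕ} {G : Type} [Group G] (mv d : ℕ) (A : GAct Ω G)
    (p : PSpace (fun _ : Fin (n + 1) => mv + 1)) : ℝ :=
  sInf {l : ℝ | 0 < l ∧
    ∃ M : Matrix (Fin (n + 1) → MonH mv d) (Fin (n + 1) → MonH mv d) ℝ,
      SepGram M ∧ (∑ k, M k k) ≤ 1 ∧
      (∀ (g : G) (k k' : Fin (n + 1) → MonH mv d),
        M (fun i => k (A.act g i)) (fun i => k' (A.act g i)) = M k k') ∧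
      p = l • gramH M}

/-! ### Factorizability -/

/-- `(Ω,G)` is factorizable. -/
def Factorizable (A : GAct Ω G) : Prop :=
  ∀ N : ℕ, ∃ Cf : ∀ i : Fin (n + 1), (MFi Ω i → Fin N) → ℝ,
    (∀ i β, 0 < Cf i β) ∧
    (∀ (g : G) (i : Fin (n + 1)) (β : MFi Ω i → Fin N),
      Cf (A.act g i) (A.shift g i β) = Cf i β) ∧
    ∀ α : MultiFacet Ω → Fin N,
      (∏ i : Fin (n + 1), Cf i (restr α i)) =
        ((Fintype.card {γ : MultiFacet Ω → Fin N //
          ∃ gs : Fin (n + 1) → G, ∀ i : Fin (n + 1), A.act (gs i) i = i ∧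
            ∀ F : MFi Ω i, γ (A.actF (gs i)⁻¹ F.1) = α F.1} : ℕ) : ℝ)⁻¹

/-! ### Two-block (single edge `Λ₁`) ranks -/

/-- The single-edge rank of a two-block polynomial. -/
def rank1 {mv : ℕ} (p : MvPolynomial (Fin mv ⊕ Fin mv) ℝ) : ℕ∞ :=
  ⨅ r : {r : ℕ // ∃ f g : Fin r → MvPolynomial (Fin mv) ℝ,
    p = ∑ α : Fin r, rename Sum.inl (f α) * rename Sum.inr (g α)}, (r.1 : ℕ∞)

/-- The single-edge separable rank (w.r.t. the local sos cones). -/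
def sep1 {mv : ℕ} (p : MvPolynomial (Fin mv ⊕ Fin mv) ℝ) : ℕ∞ :=
  ⨅ r : {r : ℕ // ∃ f g : Fin r → MvPolynomial (Fin mv) ℝ,
    (∀ α, IsSos (f α) ∧ IsSos (g α)) ∧
    p = ∑ α : Fin r, rename Sum.inl (f α) * rename Sum.inr (g α)}, (r.1 : ℕ∞)

/-- The single-edge sos rank. -/
def sos1 {mv : ℕ} (p : MvPolynomial (Fin mv ⊕ Fin mv) ℝ) : ℕ∞ :=
  ⨅ r : {r : ℕ // ∃ (s₀ s₁ : ℕ) (a : Fin s₀ → Fin r → MvPolynomial (Fin mv) ℝ)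
    (b : Fin s₁ → Fin r → MvPolynomial (Fin mv) ℝ),
    p = ∑ k : Fin s₀, ∑ l : Fin s₁,
      (∑ α : Fin r, rename Sum.inl (a k α) * rename Sum.inr (b l α)) ^ 2}, (r.1 : ℕ∞)

/-- The Euclidean-distance-matrix polynomial `p_m = ∑ (i-j)² xᵢ² yⱼ²`. -/
def pm (mv : ℕ) : MvPolynomial (Fin mv ⊕ Fin mv) ℝ :=
  ∑ i : Fin mv, ∑ j : Fin mv,
    MvPolynomial.C (((i : ℕ) : ℝ) - ((j : ℕ) : ℝ)) ^ 2 *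
      (X (Sum.inl i) ^ 2 * X (Sum.inr j) ^ 2)


/-- Constant block sizes are trivially compatible with any group action. -/
theorem constCompat {n : ℕ} {Ω : Finset (Fin (n + 1)) → ℕ} {G : Type} [Group G]
    (A : GAct Ω G) (mv : ℕ) :
    ∀ (g : G) (i : Fin (n + 1)),
      (fun _ : Fin (n + 1) => mv) (A.act g i) = (fun _ : Fin (n + 1) => mv) i :=
  fun _ _ => rfl

/-! ### Auxiliary lemmas for statement 6 -/

lemma renameCastComp {a b c' : ℕ} (h1 : a = b) (h2 : b = c') (x : MvPolynomial (Fin a) ℝ) :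
    rename (Fin.cast h2) (rename (Fin.cast h1) x) = rename (Fin.cast (h1.trans h2)) x := by
  rw [rename_rename]
  rfl

lemma renameCastCongr {i₁ i₂ i : Fin (n + 1)} (h : i₁ = i₂) (h1 : m i₁ = m i) (h2 : m i₂ = m i)
    (f : ∀ k, LSpace m k) : rename (Fin.cast h1) (f i₁) = rename (Fin.cast h2) (f i₂) := by
  subst h; rfl

lemma renamePermVarEmb (A : GAct Ω G) (hm : ∀ (g : G) (i : Fin (n + 1)), m (A.act g i) = m i)
    (g : G) (i : Fin (n + 1)) (x : LSpace m i) :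
    rename (permVar A hm g) (emb m i x)
      = emb m (A.act g i) (rename (Fin.cast (hm g i).symm) x) := by
  simp only [emb]
  rw [rename_rename, rename_rename]
  rfl

lemma permVarInj (A : GAct Ω G) (hm : ∀ (g : G) (i : Fin (n + 1)), m (A.act g i) = m i)
    (g : G) : Function.Injective (permVar A hm g) := by
  rintro ⟨i, a⟩ ⟨i', a'⟩ hvw
  have h1 : A.act g i = A.act g i' := congrArg Sigma.fst hvw
  have hi : i = i' := (A.act g).injective h1
  subst hi
  have h2 : HEq (Fin.cast (hm g i).symm a) (Fin.cast (hm g i).symm a') :=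
    (Sigma.mk.inj_iff.mp hvw).2
  have h2e : (Fin.cast (hm g i).symm a) = (Fin.cast (hm g i).symm a') := eq_of_heq h2
  have h3v : ((Fin.cast (hm g i).symm a : Fin (m (A.act g i))) : ℕ)
      = ((Fin.cast (hm g i).symm a' : Fin (m (A.act g i))) : ℕ) := congrArg Fin.val h2e
  have h3 : a = a' := Fin.ext h3v
  rw [h3]

lemma actF_inv_cancel (A : GAct Ω G) (g : G) (F : MultiFacet Ω) :
    A.actF g⁻¹ (A.actF g F) = F := by
  rw [map_inv]; exact Equiv.symm_apply_apply _ _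

lemma actF_mul_apply (A : GAct Ω G) (a b : G) (F : MultiFacet Ω) :
    A.actF (a * b) F = A.actF a (A.actF b F) := by
  rw [map_mul]; rfl

lemma act_mul_apply (A : GAct Ω G) (a b : G) (i : Fin (n + 1)) :
    A.act (a * b) i = A.act a (A.act b i) := by
  rw [map_mul]; rfl

lemma exists_facet_mem (hΩ : IsWSC Ω) (i : Fin (n + 1)) :
    ∃ F : Finset (Fin (n + 1)), IsFacet Ω F ∧ i ∈ F := by
  classical
  have hmem : ({i} : Finset (Fin (n + 1))) ∈
      Finset.univ.filter (fun S : Finset (Fin (n + 1)) => Ω S ≠ 0 ∧ i ∈ S) := by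
    simp [hΩ.2 i]
  obtain ⟨S, hS, hmax⟩ := Finset.exists_max_image _ Finset.card ⟨_, hmem⟩
  simp only [Finset.mem_filter, Finset.mem_univ, true_and] at hS
  refine ⟨S, ⟨hS.1, ?_⟩, hS.2⟩
  intro T hT hST
  have hTmem : T ∈ Finset.univ.filter (fun S : Finset (Fin (n + 1)) => Ω S ≠ 0 ∧ i ∈ S) := by
    simp [hT, hST hS.2]
  exact (Finset.eq_of_subset_of_card_le hST (hmax T hTmem)).symm

lemma facet_nonempty (hΩ : IsWSC Ω) {F : Finset (Fin (n + 1))} (hF : IsFacet Ω F) :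
    F.Nonempty := by
  rcases F.eq_empty_or_nonempty with h | h
  · exfalso
    subst h
    have := hF.2 {0} (hΩ.2 0) (Finset.empty_subset _)
    simp at this
  · exact h

lemma mfi_nonempty (hΩ : IsWSC Ω) (i : Fin (n + 1)) : Nonempty (MFi Ω i) := by
  obtain ⟨F, hF, hi⟩ := exists_facet_mem hΩ i
  exact ⟨⟨⟨⟨F, hF⟩, ⟨0, Nat.pos_of_ne_zero hF.1⟩⟩, hi⟩⟩

/-- existence of separable `(Ω,G)`-decompositions for free group actions. -/
theorem statement6 {n : ℕ} {Ω : Finset (Fin (n + 1)) → ℕ} (hΩ : IsWSC Ω) (hconn : Conn Ω)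
    {G : Type} [Group G] [Fintype G] (A : GAct Ω G) (hfree : A.Free)
    {m : Fin (n + 1) → ℕ} (hm : ∀ (g : G) (i : Fin (n + 1)), m (A.act g i) = m i)
    (C : ∀ i : Fin (n + 1), Set (LSpace m i))
    (hCcone : ∀ i, IsConvexConeSet (C i)) (hCcomp : ConeCompat A hm C)
    (p : PSpace m) (hinv : GInvPoly A hm p) (hsep : p ∈ SepCone m C) :
    SepOGRank A hm C p < ⊤ := by
  classical
  have hMFi : ∀ i, Nonempty (MFi Ω i) := mfi_nonempty hΩ
  have hMF : Nonempty (MultiFacet Ω) := ⟨(hMFi 0).some.1⟩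
  obtain ⟨r, qq, hqqC, hp⟩ := hsep
  rcases Nat.eq_zero_or_pos r with hr | hr
  · -- trivial case: `p = 0`
    subst hr
    simp only [Finset.univ_eq_empty, Finset.sum_empty] at hp
    haveI : IsEmpty (MultiFacet Ω → Fin 0) := ⟨fun α => (α hMF.some).elim0⟩
    have hdec : HasSepOGDec A hm C p 0 := by
      refine ⟨fun i β => (β (hMFi i).some).elim0, ?_, ?_, ?_⟩
      · rw [hp]; simp
      · intro g i β; exact (β (hMFi i).some).elim0
      · intro i β; exact (β (hMFi i).some).elim0
    exact lt_of_le_of_lt (iInf_le _ ⟨0, hdec⟩) (by exact_mod_cast WithTop.coe_lt_top 0)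
  · -- main case
    have hC0 : ∀ i, (0 : LSpace m i) ∈ C i := by
      intro i
      have h := hCcone i _ (hqqC ⟨0, hr⟩ i) _ (hqqC ⟨0, hr⟩ i) 0 0 le_rfl le_rfl
      simpa using h
    -- the scaling constant
    obtain ⟨c, hc0, hcpow⟩ : ∃ c : ℝ, 0 ≤ c ∧ c ^ (n + 1) = ((Fintype.card G : ℝ))⁻¹ := by
      have hx : (0 : ℝ) ≤ ((Fintype.card G : ℝ))⁻¹ := by positivity
      refine ⟨((Fintype.card G : ℝ))⁻¹ ^ ((n + 1 : ℝ)⁻¹), Real.rpow_nonneg hx _, ?_⟩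
      rw [← Real.rpow_natCast (((Fintype.card G : ℝ))⁻¹ ^ ((n + 1 : ℝ)⁻¹)) (n + 1),
        ← Real.rpow_mul hx]
      have hne : ((n : ℝ) + 1) ≠ 0 := by positivity
      rw [show ((n + 1 : ℕ) : ℝ) = (n : ℝ) + 1 by push_cast; ring,
        inv_mul_cancel₀ hne, Real.rpow_one]
    have hcard : (Fintype.card G : ℝ) ≠ 0 := by
      exact_mod_cast Fintype.card_ne_zero
    -- orbit representatives and translation elements
    let s : Setoid (MultiFacet Ω) :=
      ⟨fun F F' => ∃ g : G, A.actF g F' = F,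
        ⟨fun F => ⟨1, by simp⟩,
         fun {F F'} ⟨g, hg⟩ => ⟨g⁻¹, by rw [← hg, actF_inv_cancel]⟩,
         fun {F F' F''} ⟨g, hg⟩ ⟨g', hg'⟩ => ⟨g * g', by rw [actF_mul_apply, hg', hg]⟩⟩⟩
    have hrep : ∀ F : MultiFacet Ω, ∃ g : G, A.actF g ((Quotient.mk s F).out) = F := by
      intro F
      have h1 : Quotient.mk s ((Quotient.mk s F).out) = Quotient.mk s F :=
        Quotient.out_eq _
      obtain ⟨g, hg⟩ : ∃ g : G, A.actF g F = (Quotient.mk s F).out := Quotient.exact h1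
      exact ⟨g⁻¹, by rw [← hg, actF_inv_cancel]⟩
    choose θ hθ using hrep
    have θuniq : ∀ (F : MultiFacet Ω) (g : G),
        A.actF g ((Quotient.mk s F).out) = F → g = θ F := by
      intro F g hg
      have h1 : A.actF (θ F)⁻¹ F = (Quotient.mk s F).out := by
        have h0 := congrArg (A.actF (θ F)⁻¹) (hθ F)
        rw [actF_inv_cancel] at h0
        exact h0.symm
      have h2 : A.actF ((θ F)⁻¹ * g) ((Quotient.mk s F).out) = (Quotient.mk s F).out := by
        rw [actF_mul_apply, hg, h1]
      have h3 := hfree _ _ h2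
      exact (inv_mul_eq_one.mp h3).symm
    have hout_shift : ∀ (g : G) (F : MultiFacet Ω),
        (Quotient.mk s (A.actF g F)).out = (Quotient.mk s F).out := by
      intro g F
      have : Quotient.mk s (A.actF g F) = Quotient.mk s F := Quotient.sound ⟨g, rfl⟩
      rw [this]
    have θshift : ∀ (g : G) (F : MultiFacet Ω), θ (A.actF g F) = g * θ F := by
      intro g F
      refine (θuniq (A.actF g F) (g * θ F) ?_).symm
      rw [hout_shift, actF_mul_apply, hθ F]
    -- the index set and the target functions
    obtain ⟨e⟩ : Nonempty ((Fin r × G) ≃ Fin (Fintype.card (Fin r × G))) :=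
      ⟨Fintype.equivFin _⟩
    set N := Fintype.card (Fin r × G) with hN
    obtain ⟨Af, hAf⟩ : ∃ Af : (Fin r × G) → MultiFacet Ω → Fin N,
        ∀ jg F, Af jg F = e (jg.1, jg.2 * θ F) := ⟨_, fun _ _ => rfl⟩
    -- uniqueness of the parameters from a single restriction
    have hA1 : ∀ (i : Fin (n + 1)) (jg jg' : Fin r × G),
        restr (Af jg) i = restr (Af jg') i → jg = jg' := by
      intro i jg jg' hβ
      obtain ⟨F⟩ := hMFi i
      have h1 : Af jg F.1 = Af jg' F.1 := congrFun hβ F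
      rw [hAf, hAf] at h1
      have h2 := e.injective h1
      rw [Prod.mk.injEq] at h2
      exact Prod.ext_iff.mpr ⟨h2.1, mul_right_cancel h2.2⟩
    have hAinj : Function.Injective Af := by
      intro jg jg' h
      exact hA1 0 jg jg' (funext fun F => congrFun h F.1)
    -- the component polynomials
    obtain ⟨qd, hqdpos, hqdneg⟩ : ∃ qd : ∀ i : Fin (n + 1), (MFi Ω i → Fin N) → LSpace m i,
        (∀ (i : Fin (n + 1)) (β : MFi Ω i → Fin N) (jg : Fin r × G),
          β = restr (Af jg) i →
            qd i β = c • rename (Fin.cast (hm jg.2 i)) (qq jg.1 (A.act jg.2 i))) ∧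
        (∀ (i : Fin (n + 1)) (β : MFi Ω i → Fin N),
          (¬ ∃ jg : Fin r × G, β = restr (Af jg) i) → qd i β = 0) := by
      refine ⟨fun i β =>
        if hx : ∃ jg : Fin r × G, β = restr (Af jg) i then
          c • rename (Fin.cast (hm hx.choose.2 i)) (qq hx.choose.1 (A.act hx.choose.2 i))
        else 0, ?_, ?_⟩
      · intro i β jg h
        have hx : ∃ jg' : Fin r × G, β = restr (Af jg') i := ⟨jg, h⟩
        simp only [dif_pos hx]
        have h2 : hx.choose = jg := hA1 i _ _ (hx.choose_spec.symm.trans h)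
        rw [h2]
      · intro i β h
        simp only [dif_neg h]
    -- invariance of the elementary summands
    have hSg : ∀ g : G,
        (∑ j : Fin r, ∏ i : Fin (n + 1),
          emb m i (rename (Fin.cast (hm g i)) (qq j (A.act g i)))) = p := by
      intro g
      apply rename_injective (permVar A hm g) (permVarInj A hm g)
      rw [hinv g, map_sum, hp]
      refine Finset.sum_congr rfl fun j _ => ?_
      rw [map_prod, ← Equiv.prod_comp (A.act g) (fun i => emb m i (qq j i))]
      refine Finset.prod_congr rfl fun i _ => ?_
      rw [renamePermVarEmb, renameCastComp]
      have hid : (Fin.cast ((hm g i).trans (hm g i).symm) :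
          Fin (m (A.act g i)) → Fin (m (A.act g i))) = id := funext fun x => rfl
      rw [hid, rename_id, AlgHom.id_apply]
    -- the key global rigidity statement
    have hglob : ∀ α : MultiFacet Ω → Fin N,
        (∀ i, ∃ jg : Fin r × G, restr α i = restr (Af jg) i) →
          ∃ jg : Fin r × G, α = Af jg := by
      intro α H
      choose w hw using H
      have hstep : ∀ a b : Fin (n + 1),
          (∃ F : Finset (Fin (n + 1)), IsFacet Ω F ∧ a ∈ F ∧ b ∈ F) → w a = w b := by
        rintro a b ⟨F0, hF0, ha, hb⟩
        set Fm : MultiFacet Ω := ⟨⟨F0, hF0⟩, ⟨0, Nat.pos_of_ne_zero hF0.1⟩⟩ with hFm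
        have h1 : α Fm = Af (w a) Fm := congrFun (hw a) ⟨Fm, ha⟩
        have h2 : α Fm = Af (w b) Fm := congrFun (hw b) ⟨Fm, hb⟩
        have h3 : Af (w a) Fm = Af (w b) Fm := h1.symm.trans h2
        rw [hAf, hAf] at h3
        have h4 := e.injective h3
        rw [Prod.mk.injEq] at h4
        exact Prod.ext_iff.mpr ⟨h4.1, mul_right_cancel h4.2⟩
      have hconst : ∀ a b : Fin (n + 1), w a = w b := by
        intro a b
        induction hconn a b with
        | refl => rfl
        | tail _ hs ih => exact ih.trans (hstep _ _ hs)
      refine ⟨w 0, funext fun F => ?_⟩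
      obtain ⟨i, hi⟩ := facet_nonempty hΩ F.1.2
      have h1 : α F = Af (w i) F := congrFun (hw i) ⟨F, hi⟩
      rw [h1, hconst i 0]
    -- the decomposition
    have hdec : HasSepOGDec A hm C p N := by
      refine ⟨qd, ?_, ?_, ?_⟩
      · -- the sum identity
        have hvanish : ∀ α ∈ (Finset.univ : Finset (MultiFacet Ω → Fin N)),
            α ∉ Finset.univ.image Af →
            (∏ i : Fin (n + 1), emb m i (qd i (restr α i))) = 0 := by
          intro α _ hα
          have hnot : ¬ ∃ jg : Fin r × G, α = Af jg := by
            rintro ⟨jg, h⟩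
            exact hα (Finset.mem_image.2 ⟨jg, Finset.mem_univ _, h.symm⟩)
          have hi : ∃ i, ¬ ∃ jg : Fin r × G, restr α i = restr (Af jg) i := by
            by_contra hco
            push_neg at hco
            exact hnot (hglob α hco)
          obtain ⟨i, hi⟩ := hi
          refine Finset.prod_eq_zero (Finset.mem_univ i) ?_
          rw [hqdneg i _ hi, map_zero]
        calc p = ∑ g : G, MvPolynomial.C (c ^ (n + 1)) *
                (∑ j : Fin r, ∏ i : Fin (n + 1),
                  emb m i (rename (Fin.cast (hm g i)) (qq j (A.act g i)))) := by
              have h1 : ∀ g : G, MvPolynomial.C (c ^ (n + 1)) *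
                  (∑ j : Fin r, ∏ i : Fin (n + 1),
                    emb m i (rename (Fin.cast (hm g i)) (qq j (A.act g i))))
                  = MvPolynomial.C (c ^ (n + 1)) * p := fun g => by rw [hSg g]
              rw [Finset.sum_congr rfl fun g _ => h1 g, Finset.sum_const, Finset.card_univ]
              rw [hcpow, nsmul_eq_mul]
              rw [show ((Fintype.card G : ℕ) : PSpace m)
                    = MvPolynomial.C ((Fintype.card G : ℝ)) from
                  (map_natCast (MvPolynomial.C : ℝ →+* PSpace m) _).symm]
              rw [← mul_assoc, ← map_mul, mul_inv_cancel₀ hcard, map_one, one_mul]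
          _ = ∑ jg : Fin r × G, ∏ i : Fin (n + 1), emb m i (qd i (restr (Af jg) i)) := by
              rw [Fintype.sum_prod_type_right]
              refine Finset.sum_congr rfl fun g _ => ?_
              rw [Finset.mul_sum]
              refine Finset.sum_congr rfl fun j _ => ?_
              have h2 : ∀ i : Fin (n + 1), emb m i (qd i (restr (Af (j, g)) i))
                  = MvPolynomial.C c *
                    emb m i (rename (Fin.cast (hm g i)) (qq j (A.act g i))) := by
                intro i
                rw [hqdpos i _ (j, g) rfl, map_smul, smul_eq_C_mul]
              rw [Finset.prod_congr rfl fun i _ => h2 i, Finset.prod_mul_distrib,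
                Finset.prod_const, Finset.card_univ, Fintype.card_fin, ← map_pow]
          _ = ∑ α ∈ Finset.univ.image Af,
                ∏ i : Fin (n + 1), emb m i (qd i (restr α i)) := by
              rw [Finset.sum_image (fun x _ y _ h => hAinj h)]
          _ = ∑ α : MultiFacet Ω → Fin N,
                ∏ i : Fin (n + 1), emb m i (qd i (restr α i)) :=
              Finset.sum_subset (Finset.subset_univ _) hvanish
      · -- equivariance
        intro g i β
        by_cases hx : ∃ jg : Fin r × G, β = restr (Af jg) i
        · obtain ⟨jg, hβ⟩ := hx
          subst hβ
          have hsh : A.shift g i (restr (Af jg) i)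
              = restr (Af (jg.1, jg.2 * g⁻¹)) (A.act g i) := by
            funext F
            show Af jg (A.actF g⁻¹ F.1) = Af (jg.1, jg.2 * g⁻¹) F.1
            rw [hAf, hAf, θshift, ← mul_assoc]
          rw [hsh, hqdpos _ _ _ rfl, hqdpos _ _ _ rfl, map_smul, renameCastComp]
          have hidx : A.act (jg.2 * g⁻¹) (A.act g i) = A.act jg.2 i := by
            rw [← act_mul_apply, inv_mul_cancel_right]
          exact congrArg (c • ·) (renameCastCongr hidx _ _ (qq jg.1))
        · have hx' : ¬ ∃ jg : Fin r × G, A.shift g i β = restr (Af jg) (A.act g i) := by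
            rintro ⟨jg, hjg⟩
            refine hx ⟨(jg.1, jg.2 * g), funext fun F => ?_⟩
            have hmem : A.act g i ∈ (A.actF g F.1).1.1 := by
              rw [A.collapse]
              exact Finset.mem_image_of_mem _ F.2
            have h2 := congrFun hjg (⟨A.actF g F.1, hmem⟩ : MFi Ω (A.act g i))
            have h3 : (⟨A.actF g⁻¹ (A.actF g F.1),
                A.mem_shift g i ⟨A.actF g F.1, hmem⟩⟩ : MFi Ω i) = F :=
              Subtype.ext (actF_inv_cancel A g F.1)
            show β F = Af (jg.1, jg.2 * g) F.1
            calc β F = β ⟨A.actF g⁻¹ (A.actF g F.1),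
                    A.mem_shift g i ⟨A.actF g F.1, hmem⟩⟩ := by rw [h3]
              _ = Af jg (A.actF g F.1) := h2
              _ = Af (jg.1, jg.2 * g) F.1 := by
                  rw [hAf, hAf, θshift, ← mul_assoc]
          rw [hqdneg _ _ hx', hqdneg _ _ hx, map_zero]
      · -- cone membership
        intro i β
        by_cases hx : ∃ jg : Fin r × G, β = restr (Af jg) i
        · obtain ⟨jg, hβ⟩ := hx
          rw [hqdpos i β jg hβ]
          have h1 : rename (Fin.cast (hm jg.2 i)) (qq jg.1 (A.act jg.2 i)) ∈ C i :=
            (hCcomp jg.2 i _).mp (hqqC jg.1 _)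
          have h2 := hCcone i _ h1 _ h1 c 0 hc0 le_rfl
          simpa using h2
        · rw [hqdneg i β hx]
          exact hC0 i
    exact lt_of_le_of_lt (iInf_le _ ⟨N, hdec⟩) (by exact_mod_cast WithTop.coe_lt_top N)


end
end PolyDec
end

section
/- Let a finite group G act on [n], let all blocks have m variables, and let p ∈ 𝒫 satisfy deg_loc(p) ≤ 2d. Then the following are equivalent: (i) p is a sum of squares and G-invariant; (ii) there exists a positive semidefinite, G-invariant matrix M ∈ M_D(ℝ)^{⊗(n+1)} with 𝒢(M) = p. -/
namespace PolyDec

open MvPolynomial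

attribute [local instance] Classical.propDecidable

noncomputable section

variable {n : ℕ} {Ω : Finset (Fin (n + 1)) → ℕ} {G : Type} [Group G]

variable {m : Fin (n + 1) → ℕ}

section Statement8Aux

variable {n mv d : ℕ}

private def Ek (k : Fin (n + 1) → Mon mv d) : (Σ _ : Fin (n + 1), Fin mv) →₀ ℕ :=
  Finsupp.equivFunOnFinite.symm fun v => ((k v.1).1 v.2 : ℕ)

private lemma Ek_apply (k : Fin (n + 1) → Mon mv d) (v : Σ _ : Fin (n + 1), Fin mv) :
    Ek k v = ((k v.1).1 v.2 : ℕ) := rfl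

private lemma Ek_injective : Function.Injective (Ek (n := n) (mv := mv) (d := d)) := by
  intro k k' h
  funext i
  apply Subtype.ext
  funext j
  have h2 := DFunLike.congr_fun h (⟨i, j⟩ : Σ _ : Fin (n + 1), Fin mv)
  exact Fin.val_injective h2

private def mon (k : Fin (n + 1) → Mon mv d) : PSpace (fun _ : Fin (n + 1) => mv) :=
  MvPolynomial.monomial (Ek k) 1

private lemma monomial_one_eq {σ : Type} [Fintype σ] (f : σ → ℕ) :
    (MvPolynomial.monomial (Finsupp.equivFunOnFinite.symm f) (1 : ℝ)) = ∏ v : σ, X v ^ f v := by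
  rw [MvPolynomial.monomial_eq, C_1, one_mul, Finsupp.prod_fintype]
  · simp [Finsupp.equivFunOnFinite]
  · intro v; exact pow_zero _

private lemma prod_monAt (k : Fin (n + 1) → Mon mv d) :
    (∏ i, monAt (n := n) i (k i)) = mon k := by
  rw [mon, Ek, monomial_one_eq]
  rw [← Finset.univ_sigma_univ, Finset.prod_sigma]
  rfl

private lemma gram_eq (M : Matrix (Fin (n + 1) → Mon mv d) (Fin (n + 1) → Mon mv d) ℝ) :
    gram M = ∑ k : Fin (n + 1) → Mon mv d, ∑ k' : Fin (n + 1) → Mon mv d,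
      M k k' • (mon k * mon k') := by
  refine Finset.sum_congr rfl fun k _ => Finset.sum_congr rfl fun k' _ => ?_
  rw [Finset.prod_mul_distrib, prod_monAt, prod_monAt]


private lemma rho_injective (π : Equiv.Perm (Fin (n + 1))) :
    Function.Injective (fun v : Σ _ : Fin (n + 1), Fin mv =>
      (⟨π v.1, v.2⟩ : Σ _ : Fin (n + 1), Fin mv)) := by
  rintro ⟨a, x⟩ ⟨b, y⟩ h
  simp only [Sigma.mk.inj_iff] at h
  obtain ⟨h1, h2⟩ := h
  have hab : a = b := π.injective h1
  subst hab
  cases eq_of_heq h2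
  rfl

private lemma rename_mon (π : Equiv.Perm (Fin (n + 1))) (k : Fin (n + 1) → Mon mv d) :
    rename (fun v : Σ _ : Fin (n + 1), Fin mv =>
        (⟨π v.1, v.2⟩ : Σ _ : Fin (n + 1), Fin mv)) (mon k)
      = mon fun i => k (π.symm i) := by
  have hmap : Finsupp.mapDomain (fun v : Σ _ : Fin (n + 1), Fin mv =>
      (⟨π v.1, v.2⟩ : Σ _ : Fin (n + 1), Fin mv)) (Ek k)
      = Ek fun i => k (π.symm i) := by
    apply Finsupp.ext
    rintro ⟨i, j⟩
    have hv : (⟨i, j⟩ : Σ _ : Fin (n + 1), Fin mv) =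
        (fun v : Σ _ : Fin (n + 1), Fin mv =>
          (⟨π v.1, v.2⟩ : Σ _ : Fin (n + 1), Fin mv)) ⟨π.symm i, j⟩ := by
      simp
    conv_lhs => rw [hv, Finsupp.mapDomain_apply (rho_injective π)]
    rfl
  rw [mon, mon, rename_monomial, hmap]

private def compEquiv (π : Equiv.Perm (Fin (n + 1))) :
    (Fin (n + 1) → Mon mv d) ≃ (Fin (n + 1) → Mon mv d) :=
  Equiv.piCongrLeft' (fun _ => Mon mv d) π

private lemma basis_sum (q : PSpace (fun _ : Fin (n + 1) => mv))
    (hq : ∀ s ∈ q.support, ∀ i : Fin (n + 1), (∑ j : Fin mv, s ⟨i, j⟩) ≤ d) :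
    q = ∑ k : Fin (n + 1) → Mon mv d, MvPolynomial.coeff (Ek k) q • mon k := by
  apply MvPolynomial.ext
  intro s
  rw [MvPolynomial.coeff_sum]
  by_cases hs : s ∈ q.support
  · have hb : ∀ v : Σ _ : Fin (n + 1), Fin mv, s v ≤ d := by
      intro v
      refine le_trans ?_ (hq s hs v.1)
      exact Finset.single_le_sum (f := fun j => s ⟨v.1, j⟩)
        (fun _ _ => Nat.zero_le _) (Finset.mem_univ v.2)
    set k₀ : Fin (n + 1) → Mon mv d := fun i =>
      ⟨fun j => ⟨s ⟨i, j⟩, Nat.lt_succ_of_le (hb ⟨i, j⟩)⟩, by simpa using hq s hs i⟩ with hk₀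
    have hEk : Ek k₀ = s := by
      ext v
      obtain ⟨i, j⟩ := v
      rfl
    rw [Finset.sum_eq_single k₀]
    · simp [mon, MvPolynomial.coeff_smul, MvPolynomial.coeff_monomial, hEk]
    · intro b _ hb'
      have hne : Ek b ≠ s := fun h => hb' (Ek_injective (h.trans hEk.symm))
      simp [mon, MvPolynomial.coeff_smul, MvPolynomial.coeff_monomial, hne]
    · intro h; exact absurd (Finset.mem_univ _) h
  · rw [MvPolynomial.notMem_support_iff.1 hs]
    refine (Finset.sum_eq_zero fun k _ => ?_).symm
    by_cases h : Ek k = s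
    · simp [mon, MvPolynomial.coeff_smul, MvPolynomial.coeff_monomial, h,
        MvPolynomial.notMem_support_iff.1 hs]
    · simp [mon, MvPolynomial.coeff_smul, MvPolynomial.coeff_monomial, h]

private lemma rename_eq_sum (π : Equiv.Perm (Fin (n + 1))) (q : PSpace (fun _ : Fin (n + 1) => mv))
    (hq : ∀ s ∈ q.support, ∀ i : Fin (n + 1), (∑ j : Fin mv, s ⟨i, j⟩) ≤ d) :
    rename (fun v : Σ _ : Fin (n + 1), Fin mv =>
        (⟨π v.1, v.2⟩ : Σ _ : Fin (n + 1), Fin mv)) q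
      = ∑ κ : Fin (n + 1) → Mon mv d,
          MvPolynomial.coeff (Ek fun i => κ (π i)) q • mon κ := by
  conv_lhs => rw [basis_sum q hq]
  rw [map_sum]
  refine Fintype.sum_equiv (compEquiv (mv := mv) (d := d) π) _ _ fun l => ?_
  rw [map_smul, rename_mon]
  have h1 : (fun i => (compEquiv (mv := mv) (d := d) π l) (π i)) = l := by
    funext i; simp [compEquiv, Equiv.piCongrLeft']
  rw [h1]
  rfl


private def W (i : Fin (n + 1)) (s : (Σ _ : Fin (n + 1), Fin mv) →₀ ℕ) : ℕ :=
  ∑ j : Fin mv, s ⟨i, j⟩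

private lemma W_add (i : Fin (n + 1)) (s t : (Σ _ : Fin (n + 1), Fin mv) →₀ ℕ) :
    W i (s + t) = W i s + W i t := by
  simp [W, Finset.sum_add_distrib]

private def slice (i : Fin (n + 1)) (E : ℕ) (q : PSpace (fun _ : Fin (n + 1) => mv)) :
    PSpace (fun _ : Fin (n + 1) => mv) :=
  ∑ s ∈ q.support, if W i s = E then MvPolynomial.monomial s (MvPolynomial.coeff s q) else 0

private lemma coeff_slice (i : Fin (n + 1)) (E : ℕ) (q : PSpace (fun _ : Fin (n + 1) => mv))
    (t : (Σ _ : Fin (n + 1), Fin mv) →₀ ℕ) :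
    MvPolynomial.coeff t (slice i E q) = if W i t = E then MvPolynomial.coeff t q else 0 := by
  rw [slice, MvPolynomial.coeff_sum]
  by_cases ht : t ∈ q.support
  · rw [Finset.sum_eq_single_of_mem t ht]
    · by_cases h : W i t = E
      · simp [h, MvPolynomial.coeff_monomial]
      · simp [h]
    · intro s _ hst
      by_cases h : W i s = E
      · simp [h, MvPolynomial.coeff_monomial, hst]
      · simp [h]
  · have h0 : MvPolynomial.coeff t q = 0 := MvPolynomial.notMem_support_iff.1 ht
    rw [Finset.sum_eq_zero, h0, ite_self]
    intro s hsm
    have hst : s ≠ t := fun h => ht (h ▸ hsm)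
    by_cases h : W i s = E
    · simp [h, MvPolynomial.coeff_monomial, hst]
    · simp [h]

private lemma slice_mul (i : Fin (n + 1)) (E : ℕ) (a b : PSpace (fun _ : Fin (n + 1) => mv))
    (ha : ∀ s ∈ a.support, W i s ≤ E) (hb : ∀ s ∈ b.support, W i s ≤ E) :
    slice i (E + E) (a * b) = slice i E a * slice i E b := by
  apply MvPolynomial.ext
  intro u
  rw [coeff_slice, MvPolynomial.coeff_mul, MvPolynomial.coeff_mul]
  by_cases hu : W i u = E + E
  · rw [if_pos hu]
    refine Finset.sum_congr rfl fun st hst => ?_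
    have hsum : st.1 + st.2 = u := Finset.HasAntidiagonal.mem_antidiagonal.1 hst
    have hW : W i st.1 + W i st.2 = E + E := by rw [← W_add, hsum, hu]
    rw [coeff_slice, coeff_slice]
    by_cases h1 : W i st.1 = E
    · have h2 : W i st.2 = E := by omega
      rw [if_pos h1, if_pos h2]
    · rw [if_neg h1]
      by_cases hc : MvPolynomial.coeff st.1 a = 0
      · rw [hc, zero_mul, zero_mul]
      · have hm : st.1 ∈ a.support := MvPolynomial.mem_support_iff.2 hc
        have hle : W i st.1 ≤ E := ha _ hm
        have h2 : E < W i st.2 := by omega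
        have hc2 : MvPolynomial.coeff st.2 b = 0 := by
          by_contra hc2
          exact absurd (hb _ (MvPolynomial.mem_support_iff.2 hc2)) (not_le.2 h2)
        rw [hc2, mul_zero, zero_mul]
  · rw [if_neg hu]
    symm
    apply Finset.sum_eq_zero
    intro st hst
    rw [coeff_slice, coeff_slice]
    by_cases h1 : W i st.1 = E
    · by_cases h2 : W i st.2 = E
      · exfalso
        apply hu
        rw [← Finset.HasAntidiagonal.mem_antidiagonal.1 hst, W_add, h1, h2]
      · rw [if_neg h2, mul_zero]
    · rw [if_neg h1, zero_mul]

private lemma slice_zero_of_bound (i : Fin (n + 1)) {D E : ℕ} (hDE : D < E)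
    (q : PSpace (fun _ : Fin (n + 1) => mv)) (hq : ∀ s ∈ q.support, W i s ≤ D) :
    slice i E q = 0 := by
  apply MvPolynomial.ext
  intro u
  rw [coeff_slice, MvPolynomial.coeff_zero]
  by_cases h : W i u = E
  · rw [if_pos h]
    by_contra hc
    exact absurd (hq _ (MvPolynomial.mem_support_iff.2 hc)) (by omega)
  · rw [if_neg h]

private lemma slice_sum (i : Fin (n + 1)) (E : ℕ) {N : ℕ}
    (f : Fin N → PSpace (fun _ : Fin (n + 1) => mv)) :
    slice i E (∑ k, f k) = ∑ k, slice i E (f k) := by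
  apply MvPolynomial.ext
  intro u
  rw [coeff_slice, MvPolynomial.coeff_sum, MvPolynomial.coeff_sum]
  by_cases h : W i u = E
  · rw [if_pos h]
    exact Finset.sum_congr rfl fun k _ => by rw [coeff_slice, if_pos h]
  · rw [if_neg h]
    exact (Finset.sum_eq_zero fun k _ => by rw [coeff_slice, if_neg h]).symm

private lemma sum_sq_zero {N : ℕ} (f : Fin N → PSpace (fun _ : Fin (n + 1) => mv))
    (h : ∑ k, f k ^ 2 = 0) (k : Fin N) : f k = 0 := by
  apply MvPolynomial.funext
  intro x
  have h1 := congrArg (MvPolynomial.eval x) h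
  rw [map_sum, map_zero] at h1
  simp only [map_pow] at h1
  have h2 := (Finset.sum_eq_zero_iff_of_nonneg fun j _ => sq_nonneg _).1 h1 k (Finset.mem_univ k)
  rw [map_zero]
  exact pow_eq_zero_iff two_ne_zero |>.1 h2

private lemma sos_locdeg {N : ℕ} (qf : Fin N → PSpace (fun _ : Fin (n + 1) => mv))
    (hdeg : ∀ s ∈ (∑ k, qf k ^ 2).support, ∀ i : Fin (n + 1),
      (∑ j : Fin mv, s ⟨i, j⟩) ≤ 2 * d) :
    ∀ k, ∀ s ∈ (qf k).support, ∀ i : Fin (n + 1), (∑ j : Fin mv, s ⟨i, j⟩) ≤ d := by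
  intro k s hs i
  by_contra hlt'
  have hlt : d < W i s := by
    rw [W]; omega
  set E := Finset.univ.sup (fun k' => (qf k').support.sup (W i)) with hE
  have hdE : d < E :=
    lt_of_lt_of_le hlt (le_trans (Finset.le_sup hs)
      (by rw [hE]; exact Finset.le_sup (f := fun k' => (qf k').support.sup (W i)) (Finset.mem_univ k)))
  have hbound : ∀ k', ∀ t ∈ (qf k').support, W i t ≤ E := fun k' t ht =>
    le_trans (Finset.le_sup ht) (by rw [hE]; exact Finset.le_sup (f := fun k'' => (qf k'').support.sup (W i)) (Finset.mem_univ k'))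
  have hzero : slice i (E + E) (∑ k', qf k' ^ 2) = 0 := by
    apply slice_zero_of_bound i (D := 2 * d) (by omega)
    intro t ht
    have := hdeg t ht i
    rw [W]; omega
  have hsplit : slice i (E + E) (∑ k', qf k' ^ 2) = ∑ k', (slice i E (qf k')) ^ 2 := by
    rw [slice_sum]
    refine Finset.sum_congr rfl fun k' _ => ?_
    rw [sq, sq, slice_mul i E _ _ (hbound k') (hbound k')]
  have hall : ∀ k', slice i E (qf k') = 0 :=
    fun k' => sum_sq_zero _ (hsplit.symm.trans hzero) k'
  have hne : (Finset.univ : Finset (Fin N)).Nonempty := ⟨k, Finset.mem_univ k⟩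
  obtain ⟨k₀, -, hk₀⟩ := Finset.exists_mem_eq_sup Finset.univ hne
    (fun k' => (qf k').support.sup (W i))
  have hsupne : (qf k₀).support.Nonempty := by
    by_contra hcon
    rw [Finset.not_nonempty_iff_eq_empty] at hcon
    rw [hcon, Finset.sup_empty] at hk₀
    rw [← hE, bot_eq_zero] at hk₀
    omega
  obtain ⟨s₀, hs₀, hWs₀⟩ := Finset.exists_mem_eq_sup _ hsupne (W i)
  have hWE : W i s₀ = E := by rw [← hWs₀, ← hk₀, hE]
  have hcs := congrArg (MvPolynomial.coeff s₀) (hall k₀)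
  rw [coeff_slice, if_pos hWE, MvPolynomial.coeff_zero] at hcs
  exact MvPolynomial.mem_support_iff.1 hs₀ hcs


private lemma gram_sq {ι' : Type} [Fintype ι'] (c : ι' → (Fin (n + 1) → Mon mv d) → ℝ) :
    gram (Matrix.of fun k k' : Fin (n + 1) → Mon mv d => ∑ l : ι', c l k * c l k') =
      ∑ l : ι', (∑ k : Fin (n + 1) → Mon mv d, c l k • mon k) ^ 2 := by
  rw [gram_eq]
  have h1 : ∀ l : ι', (∑ k : Fin (n + 1) → Mon mv d, c l k • mon k) ^ 2
      = ∑ k : Fin (n + 1) → Mon mv d, ∑ k' : Fin (n + 1) → Mon mv d,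
          (c l k * c l k') • (mon k * mon k') := by
    intro l
    rw [sq, Finset.sum_mul_sum]
    exact Finset.sum_congr rfl fun k _ => Finset.sum_congr rfl fun k' _ =>
      (smul_mul_smul_comm _ _ _ _)
  calc ∑ k : Fin (n + 1) → Mon mv d, ∑ k' : Fin (n + 1) → Mon mv d,
        (Matrix.of fun k k' : Fin (n + 1) → Mon mv d => ∑ l : ι', c l k * c l k') k k'
          • (mon k * mon k')
      = ∑ k : Fin (n + 1) → Mon mv d, ∑ k' : Fin (n + 1) → Mon mv d, ∑ l : ι',
          (c l k * c l k') • (mon k * mon k') := by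
        refine Finset.sum_congr rfl fun k _ => Finset.sum_congr rfl fun k' _ => ?_
        rw [Matrix.of_apply, Finset.sum_smul]
    _ = ∑ l : ι', ∑ k : Fin (n + 1) → Mon mv d, ∑ k' : Fin (n + 1) → Mon mv d,
          (c l k * c l k') • (mon k * mon k') := by
        have hswap : ∀ k : Fin (n + 1) → Mon mv d,
            (∑ k' : Fin (n + 1) → Mon mv d, ∑ l : ι', (c l k * c l k') • (mon k * mon k'))
            = ∑ l : ι', ∑ k' : Fin (n + 1) → Mon mv d,
                (c l k * c l k') • (mon k * mon k') := fun k => Finset.sum_comm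
        rw [Finset.sum_congr rfl fun k _ => hswap k]
        exact Finset.sum_comm
    _ = ∑ l : ι', (∑ k : Fin (n + 1) → Mon mv d, c l k • mon k) ^ 2 :=
        Finset.sum_congr rfl fun l _ => (h1 l).symm

private lemma psd_of_gram {ι' : Type} [Fintype ι']
    (c : ι' → (Fin (n + 1) → Mon mv d) → ℝ) :
    (Matrix.of fun k k' : Fin (n + 1) → Mon mv d =>
      ∑ l : ι', c l k * c l k').PosSemidef := by
  rw [Matrix.posSemidef_iff_dotProduct_mulVec]
  constructor
  · ext k k'
    simp only [Matrix.conjTranspose_apply, Matrix.of_apply, star_trivial]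
    exact Finset.sum_congr rfl fun l _ => mul_comm _ _
  · intro x
    have key : dotProduct (star x) ((Matrix.of fun k k' : Fin (n + 1) → Mon mv d =>
        ∑ l : ι', c l k * c l k').mulVec x) = ∑ l : ι', (∑ k, c l k * x k) ^ 2 := by
      have e1 : dotProduct (star x) ((Matrix.of fun k k' : Fin (n + 1) → Mon mv d =>
          ∑ l : ι', c l k * c l k').mulVec x)
          = ∑ k : Fin (n + 1) → Mon mv d, ∑ k' : Fin (n + 1) → Mon mv d, ∑ l : ι',
              (c l k * x k) * (c l k' * x k') := by
        simp only [dotProduct, Matrix.mulVec, Matrix.of_apply, Pi.star_apply,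
          star_trivial, Finset.mul_sum]
        refine Finset.sum_congr rfl fun k _ => Finset.sum_congr rfl fun k' _ => ?_
        rw [Finset.sum_mul, Finset.mul_sum]
        exact Finset.sum_congr rfl fun l _ => by ring
      have e2 : ∀ k : Fin (n + 1) → Mon mv d,
          (∑ k' : Fin (n + 1) → Mon mv d, ∑ l : ι', (c l k * x k) * (c l k' * x k'))
          = ∑ l : ι', ∑ k' : Fin (n + 1) → Mon mv d,
              (c l k * x k) * (c l k' * x k') := fun k => Finset.sum_comm
      have e3 : (∑ k : Fin (n + 1) → Mon mv d, ∑ l : ι', ∑ k' : Fin (n + 1) → Mon mv d,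
              (c l k * x k) * (c l k' * x k'))
          = ∑ l : ι', ∑ k : Fin (n + 1) → Mon mv d, ∑ k' : Fin (n + 1) → Mon mv d,
              (c l k * x k) * (c l k' * x k') := Finset.sum_comm
      rw [e1, Finset.sum_congr rfl fun k _ => e2 k, e3]
      refine Finset.sum_congr rfl fun l _ => ?_
      rw [sq, Finset.sum_mul_sum]
    rw [key]
    exact Finset.sum_nonneg fun l _ => sq_nonneg _

private lemma gram_shift (π : Equiv.Perm (Fin (n + 1)))
    (M : Matrix (Fin (n + 1) → Mon mv d) (Fin (n + 1) → Mon mv d) ℝ) :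
    gram (Matrix.of fun k k' : Fin (n + 1) → Mon mv d =>
        M (fun i => k (π i)) (fun i => k' (π i))) =
      rename (fun v : Σ _ : Fin (n + 1), Fin mv =>
        (⟨π v.1, v.2⟩ : Σ _ : Fin (n + 1), Fin mv)) (gram M) := by
  rw [gram_eq, gram_eq, map_sum]
  refine Fintype.sum_equiv (compEquiv (mv := mv) (d := d) π).symm _ _ fun k => ?_
  rw [map_sum]
  refine Fintype.sum_equiv (compEquiv (mv := mv) (d := d) π).symm _ _ fun k' => ?_
  rw [map_smul, map_mul, rename_mon, rename_mon, Matrix.of_apply]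
  have hk : ∀ kk : Fin (n + 1) → Mon mv d,
      (fun i => (compEquiv (mv := mv) (d := d) π).symm kk ((Equiv.symm π) i)) = kk := by
    intro kk; funext i; simp [compEquiv, Equiv.piCongrLeft']
  have hs : ∀ kk : Fin (n + 1) → Mon mv d,
      (compEquiv (mv := mv) (d := d) π).symm kk = fun i => kk (π i) := by
    intro kk; funext i; simp [compEquiv, Equiv.piCongrLeft']
  rw [hk k, hk k', hs k, hs k']

end Statement8Aux
/-- a polynomial of local degree at most `2d` is sos and `G`-invariant iff it has
a positive semidefinite `G`-invariant Gram matrix. -/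
theorem statement8 {n mv d : ℕ} {G : Type} [Group G] [Fintype G]
    (act : G →* Equiv.Perm (Fin (n + 1)))
    (p : PSpace (fun _ : Fin (n + 1) => mv))
    (hdeg : locDegLE (fun _ : Fin (n + 1) => mv) p (2 * d)) :
    (IsSos p ∧ ∀ g : G,
      rename (fun v : Σ _ : Fin (n + 1), Fin mv =>
        (⟨act g v.1, v.2⟩ : Σ _ : Fin (n + 1), Fin mv)) p = p) ↔
    ∃ M : Matrix (Fin (n + 1) → Mon mv d) (Fin (n + 1) → Mon mv d) ℝ,
      M.PosSemidef ∧
      (∀ (g : G) (k k' : Fin (n + 1) → Mon mv d),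
        M (fun i => k (act g i)) (fun i => k' (act g i)) = M k k') ∧
      gram M = p := by
  constructor
  · rintro ⟨⟨N, qf, hp⟩, hinv⟩
    have hq : ∀ k, ∀ s ∈ (qf k).support, ∀ i : Fin (n + 1),
        (∑ j : Fin mv, s ⟨i, j⟩) ≤ d := by
      apply sos_locdeg
      intro s hsup i
      rw [← hp] at hsup
      exact hdeg s hsup i
    have hcard : (0 : ℝ) < (Fintype.card G : ℝ) := by
      exact_mod_cast Fintype.card_pos
    set r : ℝ := ((Fintype.card G : ℝ))⁻¹ with hr
    have hrpos : 0 < r := inv_pos.2 hcard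
    set c : (G × Fin N) → (Fin (n + 1) → Mon mv d) → ℝ :=
      fun x κ => Real.sqrt r *
        MvPolynomial.coeff (Ek fun i => κ (act x.1 i)) (qf x.2) with hc
    refine ⟨Matrix.of fun κ κ' => ∑ x : G × Fin N, c x κ * c x κ', psd_of_gram c, ?_, ?_⟩
    · intro g k k'
      show (∑ x : G × Fin N, c x (fun i => k (act g i)) * c x (fun i => k' (act g i)))
          = ∑ x : G × Fin N, c x k * c x k'
      refine Fintype.sum_equiv (Equiv.prodCongr (Equiv.mulLeft g) (Equiv.refl (Fin N)))
        _ _ fun x => ?_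
      have harg : ∀ kk : Fin (n + 1) → Mon mv d,
          (fun i => (fun i' => kk (act g i')) (act x.1 i)) = fun i => kk (act (g * x.1) i) := by
        intro kk; funext i; rw [map_mul]; rfl
      have h1 : ∀ kk : Fin (n + 1) → Mon mv d,
          c x (fun i => kk (act g i)) =
            c (Equiv.prodCongr (Equiv.mulLeft g) (Equiv.refl (Fin N)) x) kk := by
        intro kk
        simp only [hc, Equiv.prodCongr_apply, Equiv.coe_mulLeft, Equiv.coe_refl,
          Prod.map_apply, id_eq]
        rw [harg kk]
        rfl
      rw [h1 k, h1 k']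
    · rw [gram_sq]
      have hterm : ∀ x : G × Fin N, (∑ κ : Fin (n + 1) → Mon mv d, c x κ • mon κ)
          = Real.sqrt r • rename (fun v : Σ _ : Fin (n + 1), Fin mv =>
              (⟨act x.1 v.1, v.2⟩ : Σ _ : Fin (n + 1), Fin mv)) (qf x.2) := by
        intro x
        rw [rename_eq_sum (act x.1) (qf x.2) (hq x.2), Finset.smul_sum]
        exact Finset.sum_congr rfl fun κ _ => (smul_smul _ _ _).symm
      calc (∑ x : G × Fin N, (∑ κ : Fin (n + 1) → Mon mv d, c x κ • mon κ) ^ 2)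
          = ∑ x : G × Fin N, r • (rename (fun v : Σ _ : Fin (n + 1), Fin mv =>
              (⟨act x.1 v.1, v.2⟩ : Σ _ : Fin (n + 1), Fin mv)) (qf x.2)) ^ 2 := by
            refine Finset.sum_congr rfl fun x _ => ?_
            rw [hterm x, smul_pow, Real.sq_sqrt hrpos.le]
        _ = ∑ g : G, ∑ l : Fin N, r • (rename (fun v : Σ _ : Fin (n + 1), Fin mv =>
              (⟨act g v.1, v.2⟩ : Σ _ : Fin (n + 1), Fin mv)) (qf l)) ^ 2 :=
            Fintype.sum_prod_type _
        _ = ∑ _g : G, r • p := by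
            refine Finset.sum_congr rfl fun g _ => ?_
            rw [← Finset.smul_sum]
            congr 1
            have : (∑ l : Fin N, (rename (fun v : Σ _ : Fin (n + 1), Fin mv =>
                (⟨act g v.1, v.2⟩ : Σ _ : Fin (n + 1), Fin mv)) (qf l)) ^ 2)
                = rename (fun v : Σ _ : Fin (n + 1), Fin mv =>
                    (⟨act g v.1, v.2⟩ : Σ _ : Fin (n + 1), Fin mv)) (∑ l : Fin N, qf l ^ 2) := by
              rw [map_sum]
              exact Finset.sum_congr rfl fun l _ => (map_pow _ _ _).symm
            rw [this, ← hp, hinv g]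
        _ = p := by
            rw [Finset.sum_const, Finset.card_univ, ← Nat.cast_smul_eq_nsmul ℝ, smul_smul,
              hr, mul_inv_cancel₀ (ne_of_gt hcard), one_smul]
  · rintro ⟨M, hpsd, hMinv, hMp⟩
    obtain ⟨B, hB⟩ : ∃ B : Matrix (Fin (n + 1) → Mon mv d) (Fin (n + 1) → Mon mv d) ℝ,
        M = star B * B := by
      open scoped MatrixOrder in exact CStarAlgebra.nonneg_iff_eq_star_mul_self.mp hpsd.nonneg
    have hMe : M = Matrix.of fun κ κ' : Fin (n + 1) → Mon mv d =>
        ∑ l : Fin (n + 1) → Mon mv d, B l κ * B l κ' := by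
      rw [hB]
      ext κ κ'
      simp [Matrix.mul_apply, Matrix.conjTranspose_apply, Matrix.star_eq_conjTranspose]
    constructor
    · refine ⟨Fintype.card (Fin (n + 1) → Mon mv d),
        fun t => ∑ κ : Fin (n + 1) → Mon mv d,
          B ((Fintype.equivFin (Fin (n + 1) → Mon mv d)).symm t) κ • mon κ, ?_⟩
      rw [← hMp, hMe, gram_sq (ι' := Fin (n + 1) → Mon mv d) (fun l κ => B l κ)]
      exact Fintype.sum_equiv (Fintype.equivFin (Fin (n + 1) → Mon mv d)) _ _
        fun l => by simp only [Equiv.symm_apply_apply]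
    · intro g
      have hshift : (Matrix.of fun κ κ' : Fin (n + 1) → Mon mv d =>
          M (fun i => κ (act g i)) (fun i => κ' (act g i))) = M := by
        ext κ κ'
        exact hMinv g κ κ'
      calc rename (fun v : Σ _ : Fin (n + 1), Fin mv =>
              (⟨act g v.1, v.2⟩ : Σ _ : Fin (n + 1), Fin mv)) p
          = rename (fun v : Σ _ : Fin (n + 1), Fin mv =>
              (⟨act g v.1, v.2⟩ : Σ _ : Fin (n + 1), Fin mv)) (gram M) := by rw [hMp]
        _ = gram (Matrix.of fun κ κ' : Fin (n + 1) → Mon mv d =>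
              M (fun i => κ (act g i)) (fun i => κ' (act g i))) := (gram_shift (act g) M).symm
        _ = gram M := by rw [hshift]
        _ = p := hMp

end
end PolyDec
end

section
/- Let Ω be a weighted simplicial complex on [n] with an action of a finite group G, let T ∈ ℝ^m ⊗ ⋯ ⊗ ℝ^m (n+1 factors), and let p_T := Σ_{j₀,…,jₙ=1}^m T_{j₀,…,jₙ} (x^[0]_{j₀})² ⋯ (x^[n]_{jₙ})². Then: (i) rank_{(Ω,G)}(T) = rank_{(Ω,G)}(p_T); and (ii) nn-rank_{(Ω,G)}(T) = sep-rank_{(Ω,G)}(p_T), where the separable rank of p_T is taken with respect to the local sos cones C^[i] = {sums of squares in ℝ[x^[i]]}. -/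
namespace PolyDec

open MvPolynomial

attribute [local instance] Classical.propDecidable

noncomputable section

variable {n : ℕ} {Ω : Finset (Fin (n + 1)) → ℕ} {G : Type} [Group G]

variable {m : Fin (n + 1) → ℕ}

theorem aux_iInf_congr {P Q : ℕ → Prop} (h : ∀ r, P r ↔ Q r) :
    (⨅ r : {r : ℕ // P r}, (r.1 : ℕ∞)) = ⨅ r : {r : ℕ // Q r}, (r.1 : ℕ∞) :=
  le_antisymm (le_iInf fun r => iInf_le_of_le ⟨r.1, (h r.1).2 r.2⟩ le_rfl)
    (le_iInf fun r => iInf_le_of_le ⟨r.1, (h r.1).1 r.2⟩ le_rfl)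

theorem aux_rename_cast {mv : ℕ} (h : mv = mv) (p : MvPolynomial (Fin mv) ℝ) :
    rename (Fin.cast h) p = p := by
  have hc : (Fin.cast h : Fin mv → Fin mv) = id := funext fun j => Fin.ext rfl
  rw [hc, rename_id, AlgHom.id_apply]

theorem aux_eval_sos {mv : ℕ} {q : MvPolynomial (Fin mv) ℝ} (hq : IsSos q)
    (a : Fin mv → ℝ) : 0 ≤ MvPolynomial.eval a q := by
  obtain ⟨N, f, rfl⟩ := hq
  rw [map_sum]
  exact Finset.sum_nonneg fun k _ => by rw [map_pow]; positivity

theorem aux_sos {mv : ℕ} (c : Fin mv → ℝ) (hc : ∀ j, 0 ≤ c j) :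
    IsSos (∑ j : Fin mv, MvPolynomial.C (c j) * X j ^ 2) := by
  refine ⟨mv, fun j => MvPolynomial.C (Real.sqrt (c j)) * X j, ?_⟩
  refine Finset.sum_congr rfl fun j _ => ?_
  rw [mul_pow, ← map_pow, Real.sq_sqrt (hc j)]

theorem aux_expand {n mv r : ℕ} {Ω : Finset (Fin (n + 1)) → ℕ}
    (v : ∀ i : Fin (n + 1), (MFi Ω i → Fin r) → Fin mv → ℝ) :
    (∑ α : MultiFacet Ω → Fin r, ∏ i : Fin (n + 1),
        emb (fun _ : Fin (n + 1) => mv) i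
          (∑ j : Fin mv, MvPolynomial.C (v i (restr α i) j) * X j ^ 2))
      = ∑ jf : Fin (n + 1) → Fin mv,
          MvPolynomial.C (∑ α : MultiFacet Ω → Fin r,
              ∏ i : Fin (n + 1), v i (restr α i) (jf i)) *
            ∏ i : Fin (n + 1), X (⟨i, jf i⟩ : Σ _ : Fin (n + 1), Fin mv) ^ 2 := by
  have hemb : ∀ (i : Fin (n + 1)) (β : MFi Ω i → Fin r),
      emb (fun _ : Fin (n + 1) => mv) i
          (∑ j : Fin mv, MvPolynomial.C (v i β j) * X j ^ 2)
        = ∑ j : Fin mv, MvPolynomial.C (v i β j) *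
            X (⟨i, j⟩ : Σ _ : Fin (n + 1), Fin mv) ^ 2 := by
    intro i β
    simp only [emb, map_sum, map_mul, map_pow, rename_C, rename_X]
  have h1 : ∀ α : MultiFacet Ω → Fin r,
      (∏ i : Fin (n + 1), ∑ j : Fin mv, MvPolynomial.C (v i (restr α i) j) *
          X (⟨i, j⟩ : Σ _ : Fin (n + 1), Fin mv) ^ 2)
        = ∑ jf : Fin (n + 1) → Fin mv, ∏ i : Fin (n + 1),
            MvPolynomial.C (v i (restr α i) (jf i)) *
              X (⟨i, jf i⟩ : Σ _ : Fin (n + 1), Fin mv) ^ 2 := by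
    intro α
    rw [Finset.prod_univ_sum, Fintype.piFinset_univ]
  simp only [hemb, h1]
  rw [Finset.sum_comm]
  refine Finset.sum_congr rfl fun jf _ => ?_
  have h2 : ∀ α : MultiFacet Ω → Fin r,
      (∏ i : Fin (n + 1), MvPolynomial.C (v i (restr α i) (jf i)) *
          X (⟨i, jf i⟩ : Σ _ : Fin (n + 1), Fin mv) ^ 2)
        = MvPolynomial.C (∏ i : Fin (n + 1), v i (restr α i) (jf i)) *
            ∏ i : Fin (n + 1), X (⟨i, jf i⟩ : Σ _ : Fin (n + 1), Fin mv) ^ 2 := by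
    intro α
    rw [Finset.prod_mul_distrib, ← map_prod]
  simp only [h2]
  rw [← Finset.sum_mul, ← map_sum]

theorem aux_eval_pT {n mv : ℕ} (T : (Fin (n + 1) → Fin mv) → ℝ)
    (jf : Fin (n + 1) → Fin mv) :
    MvPolynomial.eval
      (fun w : Σ _ : Fin (n + 1), Fin mv => if w.2 = jf w.1 then (1 : ℝ) else 0)
      (pT mv T) = T jf := by
  unfold pT
  rw [map_sum, Finset.sum_eq_single jf]
  · simp
  · intro jf' _ hne
    rw [map_mul, eval_C, map_prod]
    obtain ⟨i, hi⟩ : ∃ i, jf' i ≠ jf i := by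
      by_contra h; push_neg at h; exact hne (funext h)
    rw [Finset.prod_eq_zero (Finset.mem_univ i) (by simp [hi]), mul_zero]
  · intro h; exact absurd (Finset.mem_univ jf) h

theorem aux_iff1 {n mv : ℕ} {Ω : Finset (Fin (n + 1)) → ℕ} {G : Type} [Group G]
    (A : GAct Ω G) (T : (Fin (n + 1) → Fin mv) → ℝ) (r : ℕ) :
    HasTOGDec A mv T r ↔ HasOGDec A (constCompat A mv) (pT mv T) r := by
  constructor
  · rintro ⟨v, hv, hveq⟩
    refine ⟨fun i β => ∑ j : Fin mv, MvPolynomial.C (v i β j) * X j ^ 2, ?_, ?_⟩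
    · rw [show (∑ α : MultiFacet Ω → Fin r, ∏ i : Fin (n + 1),
          emb (fun _ : Fin (n + 1) => mv) i
            ((fun i β => ∑ j : Fin mv, MvPolynomial.C (v i β j) * X j ^ 2) i (restr α i)))
          = _ from aux_expand v]
      unfold pT
      exact Finset.sum_congr rfl fun jf _ => by rw [← hv jf]
    · intro g i β
      rw [aux_rename_cast]
      beta_reduce
      rw [hveq g i β]
  · rintro ⟨q, hq, hqeq⟩
    refine ⟨fun i β j =>
      MvPolynomial.eval (fun k : Fin mv => if k = j then (1 : ℝ) else 0) (q i β), ?_, ?_⟩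
    · intro jf
      have h := congrArg (MvPolynomial.eval
        (fun w : Σ _ : Fin (n + 1), Fin mv => if w.2 = jf w.1 then (1 : ℝ) else 0)) hq
      rw [aux_eval_pT] at h
      rw [h, map_sum]
      refine Finset.sum_congr rfl fun α _ => ?_
      rw [map_prod]
      refine Finset.prod_congr rfl fun i _ => ?_
      show MvPolynomial.eval _ (rename (fun j => (⟨i, j⟩ : Σ _ : Fin (n + 1), Fin mv))
        (q i (restr α i))) = _
      rw [eval_rename]
      rfl
    · intro g i β
      have h := hqeq g i β
      rw [aux_rename_cast] at h
      funext j
      beta_reduce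
      rw [h]

theorem aux_iff2 {n mv : ℕ} {Ω : Finset (Fin (n + 1)) → ℕ} {G : Type} [Group G]
    (A : GAct Ω G) (T : (Fin (n + 1) → Fin mv) → ℝ) (r : ℕ) :
    HasNNTOGDec A mv T r ↔ HasSepOGDec A (constCompat A mv)
      (fun i => {q : LSpace (fun _ : Fin (n + 1) => mv) i | IsSos q}) (pT mv T) r := by
  constructor
  · rintro ⟨v, hv, hveq, hvnn⟩
    refine ⟨fun i β => ∑ j : Fin mv, MvPolynomial.C (v i β j) * X j ^ 2, ?_, ?_, ?_⟩
    · rw [show (∑ α : MultiFacet Ω → Fin r, ∏ i : Fin (n + 1),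
          emb (fun _ : Fin (n + 1) => mv) i
            ((fun i β => ∑ j : Fin mv, MvPolynomial.C (v i β j) * X j ^ 2) i (restr α i)))
          = _ from aux_expand v]
      unfold pT
      exact Finset.sum_congr rfl fun jf _ => by rw [← hv jf]
    · intro g i β
      rw [aux_rename_cast]
      beta_reduce
      rw [hveq g i β]
    · intro i β
      exact aux_sos (v i β) (hvnn i β)
  · rintro ⟨q, hq, hqeq, hqsos⟩
    refine ⟨fun i β j =>
      MvPolynomial.eval (fun k : Fin mv => if k = j then (1 : ℝ) else 0) (q i β),
      ?_, ?_, ?_⟩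
    · intro jf
      have h := congrArg (MvPolynomial.eval
        (fun w : Σ _ : Fin (n + 1), Fin mv => if w.2 = jf w.1 then (1 : ℝ) else 0)) hq
      rw [aux_eval_pT] at h
      rw [h, map_sum]
      refine Finset.sum_congr rfl fun α _ => ?_
      rw [map_prod]
      refine Finset.prod_congr rfl fun i _ => ?_
      show MvPolynomial.eval _ (rename (fun j => (⟨i, j⟩ : Σ _ : Fin (n + 1), Fin mv))
        (q i (restr α i))) = _
      rw [eval_rename]
      rfl
    · intro g i β
      have h := hqeq g i β
      rw [aux_rename_cast] at h
      funext j
      beta_reduce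
      rw [h]
    · intro i β j
      exact aux_eval_sos (hqsos i β) _

/-- rank correspondence between tensors and polynomials:
`rank_{(Ω,G)}(T) = rank_{(Ω,G)}(p_T)` and `nn-rank_{(Ω,G)}(T) = sep-rank_{(Ω,G)}(p_T)`. -/
theorem statement15 {n mv : ℕ} {Ω : Finset (Fin (n + 1)) → ℕ} (hΩ : IsWSC Ω)
    {G : Type} [Group G] [Fintype G] (A : GAct Ω G)
    (T : (Fin (n + 1) → Fin mv) → ℝ) :
    TOGRank A mv T = OGRank A (constCompat A mv) (pT mv T) ∧
    NNTOGRank A mv T =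
      SepOGRank A (constCompat A mv)
        (fun i => {q : LSpace (fun _ : Fin (n + 1) => mv) i | IsSos q}) (pT mv T) :=
  ⟨aux_iInf_congr fun r => aux_iff1 A T r, aux_iInf_congr fun r => aux_iff2 A T r⟩

end
end PolyDec
end
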